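/- Let K be the finite field with 16 elements. If W is any Weierstrass curve over K which is an elliptic curve (nonzero discriminant) and whose total number of K-rational points, including the point at infinity, equals 25, then W is isomorphic over K, via an admissible change of Weierstrass variables (x, y) ↦ (u²x + r, u³y + u²sx + t) with u ≠ 0, to the curve Y² + Y = X³ + X². That is, there is only one K-isomorphism class of F₁₆-maximal elliptic curves. -/

import Mathlib

/-!
A curve over `𝔽₁₆` with `25` points has no rational point of order two. In characteristic two,
if `a₁ ≠ 0` the point with `x = a₃ / a₁` satisfies `P = -P`, so `a₁ = 0`: the curve is
supersingular, with normal form `Y² + a₃Y = X³ + a₄X + a₆`, `a₃ ≠ 0`. Rescaling moves `a₃` in its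
class modulo cubes, and the substitutions `(x, y) ↦ (x + s², y + s x + t)` shift `a₄` by the
additive map `s ↦ s a₃ + s⁴` and `a₆` by `t ↦ t a₃ + t²`. This leaves twelve normal forms, and
counting points on them shows that exactly one has `25` points. The counting is done in
a concrete model of `𝔽₁₆`, to which every field with sixteen elements is isomorphic.
-/

open Finset

namespace WeierstrassCurve

section NormalForm

variable {R : Type*} [CommRing R]

def charTwoJEqZeroNF (a₃ a₄ a₆ : R) : WeierstrassCurve R := ⟨0, 0, a₃, a₄, a₆⟩

instance (a₃ a₄ a₆ : R) : (charTwoJEqZeroNF a₃ a₄ a₆).IsCharTwoJEqZeroNF := ⟨rfl, rfl⟩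

lemma eq_charTwoJEqZeroNF (W : WeierstrassCurve R) [W.IsCharTwoJEqZeroNF] :
    W = charTwoJEqZeroNF W.a₃ W.a₄ W.a₆ := by
  ext
  exacts [W.a₁_of_isCharTwoJEqZeroNF, W.a₂_of_isCharTwoJEqZeroNF, rfl, rfl, rfl]

lemma rescale_smul_charTwoJEqZeroNF (u : Rˣ) (a₃ a₄ a₆ : R) :
    (⟨u⁻¹, 0, 0, 0⟩ : VariableChange R) • charTwoJEqZeroNF a₃ a₄ a₆ =
      charTwoJEqZeroNF (u ^ 3 * a₃) (u ^ 4 * a₄) (u ^ 6 * a₆) := by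
  ext <;> simp [variableChange_def, charTwoJEqZeroNF]

lemma translate_smul_charTwoJEqZeroNF [CharP R 2] (s t a₃ a₄ a₆ : R) :
    (⟨1, s ^ 2, s, t⟩ : VariableChange R) • charTwoJEqZeroNF a₃ a₄ a₆ =
      charTwoJEqZeroNF a₃ (a₄ + s * a₃ + s ^ 4) (a₆ + s ^ 2 * a₄ + s ^ 6 + t * a₃ + t ^ 2) := by
  have h2 : (2 : R) = 0 := CharTwo.two_eq_zero
  ext <;> simp only [variableChange_def, charTwoJEqZeroNF, inv_one, Units.val_one]
  · linear_combination s * h2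
  · linear_combination s ^ 2 * h2
  · linear_combination t * h2
  · linear_combination (s ^ 4 - s * a₃ - s * t) * h2
  · linear_combination (-t * a₃ - t ^ 2) * h2

lemma isUnit_a₃_of_isCharTwoJEqZeroNF [CharP R 2] (W : WeierstrassCurve R) [W.IsElliptic]
    [W.IsCharTwoJEqZeroNF] : IsUnit W.a₃ := by
  have h := W.isUnit_Δ
  rwa [Δ_of_isCharTwoJEqZeroNF_of_char_two, isUnit_pow_iff four_ne_zero] at h

lemma exists_smul_eq_charTwoJEqZeroNF [CharP R 2] (W : WeierstrassCurve R) [W.IsElliptic]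
    (ha₁ : W.a₁ = 0) :
    ∃ (C : VariableChange R) (a₃ a₄ a₆ : R), IsUnit a₃ ∧ C • W = charTwoJEqZeroNF a₃ a₄ a₆ := by
  have := W.toCharTwoJEqZeroNF_spec ha₁
  exact ⟨_, _, _, _, isUnit_a₃_of_isCharTwoJEqZeroNF (W.toCharTwoJEqZeroNF • W),
    eq_charTwoJEqZeroNF _⟩

end NormalForm

section PointCount

variable {F : Type*} [Field F]

def VariableChange.planeEquiv (C : VariableChange F) : F × F ≃ F × F where
  toFun p := (C.u ^ 2 * p.1 + C.r, C.u ^ 3 * p.2 + C.u ^ 2 * C.s * p.1 + C.t)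
  invFun q := (C.u⁻¹ ^ 2 * (q.1 - C.r), C.u⁻¹ ^ 3 * (q.2 - C.t - C.s * (q.1 - C.r)))
  left_inv p := by
    have := C.u.ne_zero
    ext <;> simp only [Units.val_inv_eq_inv_val] <;> field_simp <;> ring
  right_inv q := by
    have := C.u.ne_zero
    ext <;> simp only [Units.val_inv_eq_inv_val] <;> field_simp <;> ring

lemma equation_smul_iff (W : WeierstrassCurve F) (C : VariableChange F) (p : F × F) :
    (C • W).toAffine.Equation p.1 p.2 ↔
      W.toAffine.Equation (C.planeEquiv p).1 (C.planeEquiv p).2 := by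
  have hu := C.u.ne_zero
  rw [Affine.equation_iff', Affine.equation_iff']
  -- the defining polynomial of `C • W` is `u⁻⁶` times that of `W` in the new coordinates
  convert mul_eq_zero_iff_left (pow_ne_zero 6 (inv_ne_zero hu)) using 2
  simp only [VariableChange.planeEquiv, Equiv.coe_fn_mk, variableChange_def,
    Units.val_inv_eq_inv_val]
  field_simp
  ring

lemma natCard_point_smul (W : WeierstrassCurve F) [W.IsElliptic] (C : VariableChange F) :
    Nat.card (C • W).toAffine.Point = Nat.card W.toAffine.Point :=
  Nat.card_congr <| (Affine.pointEquiv _).trans <|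
    (Equiv.optionCongr (C.planeEquiv.subtypeEquiv (equation_smul_iff W C))).trans
      (Affine.pointEquiv _).symm

lemma natCard_point_map {L : Type*} [Field L] (W : WeierstrassCurve F) [W.IsElliptic]
    (e : F ≃+* L) : Nat.card (W.map (e : F →+* L)).toAffine.Point = Nat.card W.toAffine.Point :=
  Nat.card_congr <| (Affine.pointEquiv _).trans <|
    (Equiv.optionCongr ((e.toEquiv.prodCongr e.toEquiv).subtypeEquiv
      fun p => (Affine.map_equation W e.injective p.1 p.2).symm)).symm.trans
      (Affine.pointEquiv _).symm

lemma natCard_point_charTwoJEqZeroNF [Fintype F] [DecidableEq F] (a₃ a₄ a₆ : F)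
    [(charTwoJEqZeroNF a₃ a₄ a₆).IsElliptic] :
    Nat.card (charTwoJEqZeroNF a₃ a₄ a₆).toAffine.Point =
      #{p : F × F | p.2 ^ 2 + a₃ * p.2 = p.1 ^ 3 + a₄ * p.1 + a₆} + 1 := by
  rw [Nat.card_congr (Affine.pointEquiv _), WithZero, Finite.card_option, ← Fintype.card_subtype,
    ← Nat.card_eq_fintype_card]
  congr 1
  refine Nat.card_congr (Equiv.subtypeEquivRight fun p => ?_)
  rw [Affine.equation_iff]
  simp only [charTwoJEqZeroNF]
  constructor <;> intro h <;> linear_combination h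

lemma two_dvd_natCard_point_of_a₁_ne_zero [CharP F 2] [PerfectRing F 2]
    (W : WeierstrassCurve F) [W.IsElliptic] (ha₁ : W.a₁ ≠ 0) :
    2 ∣ Nat.card W.toAffine.Point := by
  classical
  have h2 : (2 : F) = 0 := CharTwo.two_eq_zero
  -- `-(x, y) = (x, y + a₁ x + a₃)` in characteristic two
  set x := W.a₃ / W.a₁
  have hx : W.a₁ * x = W.a₃ := mul_div_cancel₀ _ ha₁
  obtain ⟨y, hy⟩ := surjective_frobenius F 2 (x ^ 3 + W.a₂ * x ^ 2 + W.a₄ * x + W.a₆)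
  rw [frobenius_def] at hy
  have hP : W.toAffine.Equation x y := by
    rw [Affine.equation_iff]
    linear_combination hy + y * hx + W.a₃ * y * h2
  let P := Affine.Point.mk hP
  have hP2 : P + P = 0 := Affine.Point.add_self_of_Y_eq <| by
    rw [Affine.negY]
    linear_combination hx + (y + W.a₃) * h2
  have : Fact (Nat.Prime 2) := ⟨Nat.prime_two⟩
  have hord : addOrderOf P = 2 :=
    addOrderOf_eq_prime (by rwa [two_nsmul]) (Affine.Point.some_ne_zero _)
  exact hord ▸ addOrderOf_dvd_natCard P

end PointCount

lemma exists_smul_eq_of_exists_smul_map_eq {R S : Type*} [CommRing R] [CommRing S]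
    (e : R ≃+* S) (W W' : WeierstrassCurve R)
    (h : ∃ C : VariableChange S, C • W.map (e : R →+* S) = W'.map (e : R →+* S)) :
    ∃ C : VariableChange R, C • W = W' := by
  obtain ⟨C, hC⟩ := h
  refine ⟨C.map (e.symm : S →+* R), ?_⟩
  have hmap : ∀ V : WeierstrassCurve R, (V.map (e : R →+* S)).map (e.symm : S →+* R) = V :=
    fun V => by rw [map_map, RingEquiv.symm_comp, map_id]
  rw [← hmap W, map_variableChange, hC, hmap]

end WeierstrassCurve

/-- An element of `𝔽₂[x]/(x⁴ + x + 1)`, encoded by the bits of its coefficient vector. -/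
structure F16 where
  val : Fin 16
deriving DecidableEq, Fintype

namespace F16

-- `19` encodes `x⁴ + x + 1`
def mulX (a : ℕ) : ℕ := if a < 8 then 2 * a else 2 * a ^^^ 19

def mulAux : ℕ → ℕ → ℕ → ℕ
  | 0, _, _ => 0
  | n + 1, a, b => (if b % 2 = 0 then 0 else a) ^^^ mulAux n (mulX a) (b / 2)

instance : Zero F16 := ⟨⟨0⟩⟩
instance : One F16 := ⟨⟨1⟩⟩
instance : Add F16 := ⟨fun a b => ⟨a.val ^^^ b.val⟩⟩
instance : Neg F16 := ⟨id⟩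
instance : Mul F16 := ⟨fun a b => ⟨Fin.ofNat 16 (mulAux 4 a.val b.val)⟩⟩
instance : Inv F16 := ⟨npowRec 14⟩

instance : Field F16 where
  add_assoc := by decide +kernel
  zero_add := by decide +kernel
  add_zero := by decide +kernel
  add_comm := by decide +kernel
  neg_add_cancel := by decide +kernel
  mul_assoc := by decide +kernel
  one_mul := by decide +kernel
  mul_one := by decide +kernel
  mul_comm := by decide +kernel
  left_distrib := by decide +kernel
  right_distrib := by decide +kernel
  zero_mul := by decide +kernel
  mul_zero := by decide +kernel
  nsmul := nsmulRec
  zsmul := zsmulRec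
  npow := npowRec
  exists_pair_ne := ⟨0, 1, by decide⟩
  mul_inv_cancel := by decide +kernel
  inv_zero := by decide +kernel
  nnqsmul := _
  qsmul := _

instance : CharP F16 2 := (CharP.charP_iff_prime_eq_zero Nat.prime_two).2 (by decide +kernel)

lemma card_eq : Fintype.card F16 = 16 := by decide +kernel

-- `x` generates `𝔽₁₆ˣ`, so `1, x, x²` represent `𝔽₁₆ˣ / (𝔽₁₆ˣ)³`.
def a₃Reps : Finset F16 := {1, ⟨2⟩, ⟨4⟩}

-- For `a₃ = 1` the `𝔽₂`-linear map `s ↦ s * a₃ + s ^ 4` has kernel `𝔽₄`, for `a₃ = x, x²` it is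
-- bijective; the map `t ↦ t * a₃ + t ^ 2` has kernel `{0, a₃}`. This gives the classes of `a₄`
-- and `a₆` modulo these images.
def a₄Reps : Finset (F16 × F16) := {(1, 0), (1, ⟨2⟩), (1, ⟨8⟩), (1, ⟨10⟩), (⟨2⟩, 0), (⟨4⟩, 0)}

def a₆Reps : Finset (F16 × F16) := {(1, 0), (1, ⟨8⟩), (⟨2⟩, 0), (⟨2⟩, 1), (⟨4⟩, 0), (⟨4⟩, 1)}

lemma exists_cube_mul_mem_a₃Reps : ∀ a : F16, a ≠ 0 → ∃ u : F16, u ≠ 0 ∧ u ^ 3 * a ∈ a₃Reps := by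
  decide +kernel

lemma exists_translate_mem_a₄Reps :
    ∀ a₃ ∈ a₃Reps, ∀ a₄ : F16, ∃ s : F16, (a₃, a₄ + s * a₃ + s ^ 4) ∈ a₄Reps := by
  decide +kernel

lemma exists_translate_mem_a₆Reps :
    ∀ a₃ ∈ a₃Reps, ∀ a₆ : F16, ∃ t : F16, (a₃, a₆ + t * a₃ + t ^ 2) ∈ a₆Reps := by
  decide +kernel

lemma eq_of_card_eq_24 : ∀ p ∈ a₄Reps, ∀ q ∈ a₆Reps, p.1 = q.1 →
    #{xy : F16 × F16 | xy.2 ^ 2 + p.1 * xy.2 = xy.1 ^ 3 + p.2 * xy.1 + q.2} = 24 →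
      p = (1, 0) ∧ q = (1, ⟨8⟩) := by
  decide +kernel

open WeierstrassCurve

lemma exists_smul_charTwoJEqZeroNF_eq_reps (a₃ a₄ a₆ : F16) (ha₃ : a₃ ≠ 0) :
    ∃ (C : VariableChange F16) (b₃ b₄ b₆ : F16), (b₃, b₄) ∈ a₄Reps ∧ (b₃, b₆) ∈ a₆Reps ∧
      C • charTwoJEqZeroNF a₃ a₄ a₆ = charTwoJEqZeroNF b₃ b₄ b₆ := by
  obtain ⟨u, hu, hb₃⟩ := exists_cube_mul_mem_a₃Reps a₃ ha₃
  obtain ⟨s, hs⟩ := exists_translate_mem_a₄Reps _ hb₃ (u ^ 4 * a₄)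
  obtain ⟨t, ht⟩ := exists_translate_mem_a₆Reps _ hb₃ (u ^ 6 * a₆ + s ^ 2 * (u ^ 4 * a₄) + s ^ 6)
  refine ⟨⟨1, s ^ 2, s, t⟩ * ⟨(Units.mk0 u hu)⁻¹, 0, 0, 0⟩, _, _, _, hs, ht, ?_⟩
  rw [mul_smul, rescale_smul_charTwoJEqZeroNF, translate_smul_charTwoJEqZeroNF, Units.val_mk0]

theorem exists_smul_eq_of_natCard_point_eq_25 (W : WeierstrassCurve F16) [W.IsElliptic]
    (hW : Nat.card W.toAffine.Point = 25) :
    ∃ C : VariableChange F16, C • W = ⟨0, 1, 1, 0, 0⟩ := by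
  have ha₁ : W.a₁ = 0 := by
    by_contra h
    have := two_dvd_natCard_point_of_a₁_ne_zero W h
    omega
  obtain ⟨C₁, a₃, a₄, a₆, ha₃, hC₁⟩ := W.exists_smul_eq_charTwoJEqZeroNF ha₁
  obtain ⟨C₂, b₃, b₄, b₆, hb₄, hb₆, hC₂⟩ :=
    exists_smul_charTwoJEqZeroNF_eq_reps a₃ a₄ a₆ ha₃.ne_zero
  rw [← hC₁, ← mul_smul] at hC₂
  have : (charTwoJEqZeroNF b₃ b₄ b₆).IsElliptic := hC₂ ▸ inferInstance
  have hcount := natCard_point_charTwoJEqZeroNF b₃ b₄ b₆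
  rw [← hC₂, natCard_point_smul, hW] at hcount
  obtain ⟨h₄, h₆⟩ := eq_of_card_eq_24 _ hb₄ _ hb₆ rfl (by dsimp only; omega)
  simp only [Prod.mk.injEq] at h₄ h₆
  refine ⟨⟨1, ⟨2⟩, ⟨4⟩, 0⟩ * (C₂ * C₁), ?_⟩
  rw [mul_smul, hC₂, h₄.1, h₄.2, h₆.2]
  ext <;> decide +kernel

end F16

/-- Let `K` be the finite field with 16 elements. Any Weierstrass curve over
`K` with nonzero discriminant and exactly 25 `K`-rational points (including the point at
infinity) is isomorphic over `K`, via an admissible change of Weierstrass variables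
`(x, y) ↦ (u²x + r, u³y + u²sx + t)` with `u ≠ 0`, to the curve `Y² + Y = X³ + X²`: there is
only one `K`-isomorphism class of `F₁₆`-maximal elliptic curves. -/
theorem unique_F16_maximal_elliptic_curve
    (K : Type) [Field K] [Fintype K] (hK : Fintype.card K = 16)
    (W : WeierstrassCurve K) (hΔ : W.Δ ≠ 0)
    (hcard : Nat.card W.toAffine.Point = 25) :
    ∃ C : WeierstrassCurve.VariableChange K,
      C • W =
        { a₁ := 0, a₂ := 1, a₃ := 1, a₄ := 0, a₆ := 0 : WeierstrassCurve K } := by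
  have : W.IsElliptic := ⟨hΔ.isUnit⟩
  let e : K ≃+* F16 := FiniteField.ringEquivOfCardEq (hK.trans F16.card_eq.symm)
  refine WeierstrassCurve.exists_smul_eq_of_exists_smul_map_eq e _ _ ?_
  convert F16.exists_smul_eq_of_natCard_point_eq_25 (W.map (e : K →+* F16))
    ((WeierstrassCurve.natCard_point_map W e).trans hcard) using 3
  ext <;> simp
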